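/- Let σ_{k,l}, k ∈ ℕ₀, l = 1,…,a_k, be non-negative measures with support in [0,∞) such that for every N ∈ ℕ₀ the sum C_N := Σ_{k=0}^∞ Σ_{l=1}^{a_k} ∫_0^∞ r^N r^{-k} dσ_{k,l}(r) is finite. Then for the functional T : ℂ[x_1,…,x_d] → ℂ defined by T(f) := Σ_{k=0}^{deg f} Σ_{l=1}^{a_k} ∫_0^∞ f_{k,l}(r) r^{-k} dσ_{k,l}(r) (with f_{k,l} the Laplace–Fourier coefficients of f) there exists a pseudo-positive, signed moment measure σ on ℝ^d such that T(f) = ∫_{ℝ^d} f dσ for all polynomials f. -/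

import Mathlib

open MeasureTheory MvPolynomial Metric
open scoped ComplexOrder ENNReal

noncomputable section

/-- `d`-dimensional Euclidean space. -/
abbrev E (d : ℕ) := EuclideanSpace ℝ (Fin d)

/-- The (surface) measure `dθ` on the unit sphere `S^{d-1}`. -/
noncomputable def sphMeas (d : ℕ) : Measure (sphere (0 : E d) 1) :=
  (volume : Measure (E d)).toSphere

/-- A bundled orthonormal basis `Y_{k,l}`, `l = 1,…,a_k`, of the spaces `H_k(ℝ^d)` of
real-valued harmonic polynomials homogeneous of degree `k`, orthonormal with respect to
`⟨f,g⟩ = ∫_{S^{d-1}} f g dθ`. -/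
structure HarmonicBasis (d : ℕ) where
  a : ℕ → ℕ
  Y : (k : ℕ) → Fin (a k) → MvPolynomial (Fin d) ℝ
  harmonic : ∀ k l, (∑ i, pderiv i (pderiv i (Y k l))) = 0
  homogeneous : ∀ k l, (Y k l).IsHomogeneous k
  orthonormal : ∀ (k k' : ℕ) (l : Fin (a k)) (l' : Fin (a k')),
    (∫ θ : sphere (0 : E d) 1,
        (eval (fun i => (θ : E d) i) (Y k l)) * (eval (fun i => (θ : E d) i) (Y k' l'))
      ∂(sphMeas d)) = if k = k' ∧ (l : ℕ) = (l' : ℕ) then 1 else 0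
  complete : ∀ (k : ℕ) (P : MvPolynomial (Fin d) ℝ),
    (∑ i, pderiv i (pderiv i P)) = 0 → P.IsHomogeneous k →
      P ∈ Submodule.span ℝ (Set.range (Y k))

/-- Evaluation of a complex polynomial in `d` variables at a point of `ℝ^d`. -/
def evalC {d : ℕ} (P : MvPolynomial (Fin d) ℂ) (x : E d) : ℂ :=
  eval (fun i => (x i : ℂ)) P

/-- The polynomial `|x|² = x₁² + … + x_d²`. -/
def normSqP (d : ℕ) : MvPolynomial (Fin d) ℂ := ∑ i, X i ^ 2

/-- Integral of a (complex- or real-valued) function with respect to a signed measure,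
via the Jordan decomposition. -/
noncomputable def sInt {α : Type*} {G : Type*} [MeasurableSpace α] [NormedAddCommGroup G]
    [NormedSpace ℝ G] (μ : SignedMeasure α) (f : α → G) : G :=
  (∫ x, f x ∂μ.toJordanDecomposition.posPart) - ∫ x, f x ∂μ.toJordanDecomposition.negPart

/-- A signed measure is a moment measure if every polynomial is integrable with respect to
its total variation. -/
def IsMomentMeasure {d : ℕ} (μ : SignedMeasure (E d)) : Prop :=
  ∀ P : MvPolynomial (Fin d) ℂ, Integrable (evalC P) μ.totalVariation

namespace HarmonicBasis

variable {d : ℕ} (B : HarmonicBasis d)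

/-- `Y_{k,l}` as a function on `ℝ^d`. -/
def Yf (k : ℕ) (l : Fin (B.a k)) (x : E d) : ℝ := eval (fun i => x i) (B.Y k l)

/-- `Y_{k,l}` as a complex polynomial. -/
def YC (k : ℕ) (l : Fin (B.a k)) : MvPolynomial (Fin d) ℂ :=
  (B.Y k l).map (algebraMap ℝ ℂ)

/-- The Laplace–Fourier coefficient `f_{k,l}(r) = ∫_{S^{d-1}} f(rθ) Y_{k,l}(θ) dθ`. -/
noncomputable def lfCoeff (f : E d → ℂ) (k : ℕ) (l : Fin (B.a k)) (r : ℝ) : ℂ :=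
  ∫ θ : sphere (0 : E d) 1, f (r • (θ : E d)) * (B.Yf k l (θ : E d) : ℂ) ∂(sphMeas d)

/-- `GaussDecomp B f K p` : `p` is a Gauss (Laplace–Fourier) decomposition of the polynomial
`f`, i.e. `f(x) = ∑_{k=0}^{K} ∑_{l=1}^{a_k} p_{k,l}(|x|²) Y_{k,l}(x)` with `p_{k,l} = 0` for
`k > K`. -/
def GaussDecomp (f : MvPolynomial (Fin d) ℂ) (K : ℕ)
    (p : (k : ℕ) → Fin (B.a k) → Polynomial ℂ) : Prop :=
  (∀ k, K < k → ∀ l, p k l = 0) ∧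
    f = ∑ k ∈ Finset.range (K + 1), ∑ l,
      Polynomial.aeval (normSqP d) (p k l) * B.YC k l

/-- The component functional `T_{k,l}(p) = T(p(|x|²) Y_{k,l}(x))`. -/
def component (T : MvPolynomial (Fin d) ℂ → ℂ) (k : ℕ) (l : Fin (B.a k))
    (p : Polynomial ℂ) : ℂ :=
  T (Polynomial.aeval (normSqP d) p * B.YC k l)

/-- A functional `T` on `ℂ[x₁,…,x_d]` is pseudo-positive definite (w.r.t. the basis `Y_{k,l}`)
if `T_{k,l}(p* p) ≥ 0` and `T_{k,l}(t · p*(t) p(t)) ≥ 0` for all univariate `p` and all `k, l`. -/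
def PPD (T : MvPolynomial (Fin d) ℂ → ℂ) : Prop :=
  ∀ (k : ℕ) (l : Fin (B.a k)) (p : Polynomial ℂ),
    0 ≤ B.component T k l (p.map (starRingEnd ℂ) * p) ∧
    0 ≤ B.component T k l (Polynomial.X * (p.map (starRingEnd ℂ) * p))

/-- A signed measure `μ` on `ℝ^d` is pseudo-positive (w.r.t. the basis `Y_{k,l}`) if
`∫ h(|x|) Y_{k,l}(x) dμ ≥ 0` for every non-negative continuous compactly supported `h`. -/
def PseudoPositive (μ : SignedMeasure (E d)) : Prop :=
  ∀ (k : ℕ) (l : Fin (B.a k)) (h : ℝ → ℝ), Continuous h → HasCompactSupport h →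
    (∀ t, 0 ≤ h t) → 0 ≤ sInt μ (fun x => h ‖x‖ * B.Yf k l x)

/-- `ν` is the family of component measures `μ_{k,l}` of the signed measure `μ`, i.e.
`∫_0^∞ h dμ_{k,l} = ∫_{ℝ^d} h(|x|) Y_{k,l}(x) dμ` for all continuous compactly supported `h`. -/
def IsComponentFamily (μ : SignedMeasure (E d))
    (ν : (k : ℕ) → Fin (B.a k) → Measure ℝ) : Prop :=
  ∀ k l, (ν k l) (Set.Iio 0) = 0 ∧
    ∀ h : ℝ → ℝ, Continuous h → HasCompactSupport h →
      ∫ t, h t ∂(ν k l) = sInt μ (fun x => h ‖x‖ * B.Yf k l x)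

/-- The summability condition `C_N = ∑_{k,l} ∫_0^∞ r^N r^{-k} dσ_{k,l}(r) < ∞` for all `N`. -/
def SummCond (σ : (k : ℕ) → Fin (B.a k) → Measure ℝ) : Prop :=
  ∀ N : ℕ, (∑' k : ℕ, ∑ l, ∫⁻ r, (ENNReal.ofReal r) ^ N * ((ENNReal.ofReal r) ^ k)⁻¹
    ∂(σ k l)) < ⊤

end HarmonicBasis

/-- The set `W_τ^{Sti}` of all non-negative moment measures on `[0,∞)` having the same
moments as `τ`. -/
def WSti (τ : Measure ℝ) : Set (Measure ℝ) :=
  {ρ | ρ (Set.Iio 0) = 0 ∧ (∀ m : ℕ, Integrable (fun t => t ^ m) ρ) ∧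
    ∀ m : ℕ, ∫ t, t ^ m ∂ρ = ∫ t, t ^ m ∂τ}

/-- A measure `ν` on `[0,∞)` is determined in the sense of Stieltjes if it is the only
non-negative measure on `[0,∞)` with its moments. -/
def StieltjesDeterminate (ν : Measure ℝ) : Prop :=
  ∀ τ : Measure ℝ, τ ∈ WSti ν → τ = ν

/-!
Let `ν_{k,l} = r^{-k} σ_{k,l}` and let `μ` be the sum over all `(k, l)` of the images of
`ν_{k,l} ⊗ Y_{k,l} dθ` under `(r, θ) ↦ r θ`. Splitting `Y_{k,l}` into positive and negative parts
writes `μ` as a difference of two positive measures; since `∫ Y_{k,l}² dθ = 1`, the masses of these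
parts on the sphere are bounded uniformly in `(k, l)`, so the finiteness of every `C_N` makes all
polynomials integrable. In polar coordinates
`∫ f dμ = ∑_{k,l} ∫ (∫ f(rθ) Y_{k,l}(θ) dθ) dν_{k,l}(r)`, and homogeneity turns
`p(|x|²) Y_{k',l'}(x)` into `p(r²) r^{k'} Y_{k',l'}(θ)`. Orthonormality then leaves
`∫ p_{k,l}(r²) r^k dν_{k,l} = ∫ p_{k,l}(r²) dσ_{k,l}` for the functional `T`, and
`∫ h(r) r^k dν_{k,l} ≥ 0` for pseudo-positivity.
-/

lemma eval_smul_of_isHomogeneous {n k : ℕ} {P : MvPolynomial (Fin n) ℝ} (hP : P.IsHomogeneous k)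
    (r : ℝ) (v : Fin n → ℝ) : eval (r • v) P = r ^ k * eval v P := by
  rw [eval_eq, eval_eq, Finset.mul_sum]
  refine Finset.sum_congr rfl fun m hm => ?_
  have hdeg : ∑ i ∈ m.support, m i = k := by
    rw [← hP (mem_support_iff.mp hm)]
    simp [Finsupp.weight, Finsupp.linearCombination_apply, Finsupp.sum]
  simp only [Pi.smul_apply, smul_eq_mul, mul_pow, Finset.prod_mul_distrib,
    Finset.prod_pow_eq_pow_sum, hdeg]
  ring

lemma evalC_normSqP {d : ℕ} (x : E d) : evalC (normSqP d) x = ((‖x‖ ^ 2 : ℝ) : ℂ) := by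
  simp [evalC, normSqP, EuclideanSpace.real_norm_sq_eq]

lemma evalC_aeval {d : ℕ} (q : Polynomial ℂ) (P : MvPolynomial (Fin d) ℂ) (x : E d) :
    evalC (Polynomial.aeval P q) x = q.eval (evalC P x) := by
  simpa [evalC, coe_aeval_eq_eval] using
    (Polynomial.aeval_algHom_apply (MvPolynomial.aeval fun i => ((x i : ℝ) : ℂ)) P q).symm

@[fun_prop]
lemma continuous_evalC {d : ℕ} (P : MvPolynomial (Fin d) ℂ) : Continuous (evalC P) :=
  (continuous_eval P).comp <| continuous_pi fun i =>
    Complex.continuous_ofReal.comp (PiLp.continuous_apply 2 _ i)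

def HasPolynomialGrowth {F G : Type*} [Norm F] [Norm G] (f : F → G) : Prop :=
  ∃ (C : ℝ) (N : ℕ), 0 ≤ C ∧ ∀ x, ‖f x‖ ≤ C * (1 + ‖x‖) ^ N

namespace HasPolynomialGrowth

variable {F G : Type*} [SeminormedAddCommGroup F]

lemma of_bounded [Norm G] {f : F → G} {C : ℝ} (hf : ∀ x, ‖f x‖ ≤ C) :
    HasPolynomialGrowth f :=
  ⟨max C 0, 0, le_max_right _ _, fun x => by simpa using (hf x).trans (le_max_left _ _)⟩

lemma add [SeminormedAddCommGroup G] {f g : F → G} (hf : HasPolynomialGrowth f)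
    (hg : HasPolynomialGrowth g) : HasPolynomialGrowth (f + g) := by
  obtain ⟨C₁, N₁, hC₁, hf⟩ := hf
  obtain ⟨C₂, N₂, hC₂, hg⟩ := hg
  refine ⟨C₁ + C₂, max N₁ N₂, add_nonneg hC₁ hC₂, fun x => ?_⟩
  have hx : 1 ≤ 1 + ‖x‖ := le_add_of_nonneg_right (norm_nonneg x)
  calc ‖f x + g x‖ ≤ C₁ * (1 + ‖x‖) ^ N₁ + C₂ * (1 + ‖x‖) ^ N₂ :=
        (norm_add_le _ _).trans (add_le_add (hf x) (hg x))
    _ ≤ (C₁ + C₂) * (1 + ‖x‖) ^ max N₁ N₂ := by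
        rw [add_mul]
        gcongr <;> first | exact hx | omega

lemma mul [SeminormedRing G] {f g : F → G} (hf : HasPolynomialGrowth f)
    (hg : HasPolynomialGrowth g) : HasPolynomialGrowth (f * g) := by
  obtain ⟨C₁, N₁, hC₁, hf⟩ := hf
  obtain ⟨C₂, N₂, hC₂, hg⟩ := hg
  refine ⟨C₁ * C₂, N₁ + N₂, mul_nonneg hC₁ hC₂, fun x => ?_⟩
  calc ‖f x * g x‖ ≤ ‖f x‖ * ‖g x‖ := norm_mul_le _ _
    _ ≤ C₁ * (1 + ‖x‖) ^ N₁ * (C₂ * (1 + ‖x‖) ^ N₂) :=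
        mul_le_mul (hf x) (hg x) (norm_nonneg _) (by positivity)
    _ = C₁ * C₂ * (1 + ‖x‖) ^ (N₁ + N₂) := by ring

end HasPolynomialGrowth

lemma hasPolynomialGrowth_evalC {d : ℕ} (P : MvPolynomial (Fin d) ℂ) :
    HasPolynomialGrowth (evalC P) := by
  induction P using MvPolynomial.induction_on with
  | C c => exact .of_bounded fun x => (by simp [evalC] : ‖evalC (C c) x‖ ≤ ‖c‖)
  | add p q hp hq =>
    have h : evalC (p + q) = evalC p + evalC q := funext fun x => by simp [evalC]
    exact h ▸ hp.add hq
  | mul_X p i hp =>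
    have hX : HasPolynomialGrowth fun x : E d => ((x i : ℝ) : ℂ) :=
      ⟨1, 1, zero_le_one, fun x => by
        rw [Complex.norm_real, one_mul, pow_one]
        exact (PiLp.norm_apply_le x i).trans (le_add_of_nonneg_left zero_le_one)⟩
    have h : evalC (p * X i) = evalC p * fun x : E d => ((x i : ℝ) : ℂ) :=
      funext fun x => by simp [evalC]
    exact h ▸ hp.mul hX

section SignedMeasureSub

variable {α : Type*} [MeasurableSpace α] (μ ν : Measure α) [IsFiniteMeasure μ] [IsFiniteMeasure ν]

lemma Measure.sub_add_eq_sub_add : μ - ν + ν = ν - μ + μ := by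
  rw [← Measure.toSignedMeasure_eq_toSignedMeasure_iff, Measure.toSignedMeasure_add,
    Measure.toSignedMeasure_add, add_comm (ν - μ).toSignedMeasure, ← sub_eq_sub_iff_add_eq_add]
  exact Measure.sub_toSignedMeasure_eq_toSignedMeasure_sub.symm

lemma sInt_toSignedMeasure_sub {G : Type*} [NormedAddCommGroup G] [NormedSpace ℝ G]
    {f : α → G} (hμ : Integrable f μ) (hν : Integrable f ν) :
    sInt (μ.toSignedMeasure - ν.toSignedMeasure) f = ∫ x, f x ∂μ - ∫ x, f x ∂ν := by
  have key := congrArg (fun ρ => ∫ x, f x ∂ρ) (Measure.sub_add_eq_sub_add μ ν)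
  rw [integral_add_measure (hμ.mono_measure Measure.sub_le) hν,
    integral_add_measure (hν.mono_measure Measure.sub_le) hμ] at key
  rw [sInt, Measure.toJordanDecomposition_toSignedMeasure_sub]
  exact sub_eq_sub_iff_add_eq_add.mpr (key.trans (add_comm _ _))

lemma totalVariation_toSignedMeasure_sub_le :
    (μ.toSignedMeasure - ν.toSignedMeasure).totalVariation ≤ μ + ν := by
  rw [SignedMeasure.totalVariation, Measure.toJordanDecomposition_toSignedMeasure_sub]
  exact add_le_add Measure.sub_le Measure.sub_le

end SignedMeasureSub

instance (d : ℕ) : IsFiniteMeasure (sphMeas d) := by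
  unfold sphMeas; infer_instance

lemma integrable_sphMeas_of_continuous {d : ℕ} {G : Type*} [NormedAddCommGroup G]
    {g : sphere (0 : E d) 1 → G} (hg : Continuous g) : Integrable g (sphMeas d) :=
  hg.integrable_of_hasCompactSupport (.of_compactSpace g)

lemma ae_nonneg_of_measure_Iio {ν : Measure ℝ} (hν : ν (Set.Iio 0) = 0) : ∀ᵐ r ∂ν, 0 ≤ r :=
  (measure_eq_zero_iff_ae_notMem.mp hν).mono fun _ h => not_lt.mp h

section Polar

variable {d : ℕ}

lemma norm_smul_sphere (r : ℝ) (θ : sphere (0 : E d) 1) : ‖r • (θ : E d)‖ = |r| := by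
  rw [norm_smul, norm_eq_of_mem_sphere, mul_one, Real.norm_eq_abs]

def polarMap (d : ℕ) (p : ℝ × sphere (0 : E d) 1) : E d := p.1 • (p.2 : E d)

lemma continuous_polarMap : Continuous (polarMap d) :=
  continuous_fst.smul (continuous_subtype_val.comp continuous_snd)

def polarMeasure (ν : Measure ℝ) (ρ : Measure (sphere (0 : E d) 1)) : Measure (E d) :=
  (ν.prod ρ).map (polarMap d)

lemma enorm_apply_smul_sphere_le {G : Type*} [NormedAddCommGroup G] {f : E d → G}
    {C : ℝ} {N : ℕ} (hC : 0 ≤ C) (hb : ∀ x, ‖f x‖ ≤ C * (1 + ‖x‖) ^ N) {r : ℝ} (hr : 0 ≤ r)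
    (θ : sphere (0 : E d) 1) :
    ‖f (r • (θ : E d))‖ₑ ≤ ENNReal.ofReal C * 2 ^ (N - 1) * (1 + ENNReal.ofReal r ^ N) := by
  calc ‖f (r • (θ : E d))‖ₑ = ENNReal.ofReal ‖f (r • (θ : E d))‖ := (ofReal_norm _).symm
    _ ≤ ENNReal.ofReal (C * (1 + r) ^ N) := by
        gcongr
        simpa [norm_smul_sphere, abs_of_nonneg hr] using hb (r • (θ : E d))
    _ ≤ ENNReal.ofReal (C * 2 ^ (N - 1) * (1 + r ^ N)) := by
        rw [mul_assoc]
        gcongr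
        simpa using add_pow_le zero_le_one hr N
    _ = ENNReal.ofReal C * 2 ^ (N - 1) * (1 + ENNReal.ofReal r ^ N) := by
        rw [ENNReal.ofReal_mul (by positivity), ENNReal.ofReal_mul hC,
          ENNReal.ofReal_add zero_le_one (by positivity), ENNReal.ofReal_pow hr,
          ENNReal.ofReal_pow zero_le_two, ENNReal.ofReal_one, ENNReal.ofReal_ofNat]

lemma lintegral_enorm_polarMeasure_le {G : Type*} [NormedAddCommGroup G] {f : E d → G}
    (hf : Continuous f) {C : ℝ} {N : ℕ} (hC : 0 ≤ C) (hb : ∀ x, ‖f x‖ ≤ C * (1 + ‖x‖) ^ N)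
    (ν : Measure ℝ) (hν : ν (Set.Iio 0) = 0) (ρ : Measure (sphere (0 : E d) 1))
    [SFinite ν] [SFinite ρ] :
    ∫⁻ x, ‖f x‖ₑ ∂(polarMeasure ν ρ)
      ≤ ENNReal.ofReal C * 2 ^ (N - 1) * (ν Set.univ + ∫⁻ r, ENNReal.ofReal r ^ N ∂ν)
          * ρ Set.univ := by
  set g : ℝ → ℝ≥0∞ := fun r => ENNReal.ofReal C * 2 ^ (N - 1) * (1 + ENNReal.ofReal r ^ N)
  have hg : Measurable g := by fun_prop
  have hν' : ∀ᵐ p ∂(ν.prod ρ), 0 ≤ p.1 := by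
    rw [ae_iff, show {p : ℝ × sphere (0 : E d) 1 | ¬0 ≤ p.1} = Set.Iio 0 ×ˢ Set.univ by
      ext; simp, Measure.prod_prod, hν, zero_mul]
  calc ∫⁻ x, ‖f x‖ₑ ∂(polarMeasure ν ρ) = ∫⁻ p, ‖f (polarMap d p)‖ₑ ∂(ν.prod ρ) :=
        lintegral_map hf.enorm.measurable continuous_polarMap.measurable
    _ ≤ ∫⁻ p, g p.1 ∂(ν.prod ρ) := lintegral_mono_ae <| hν'.mono fun p hp =>
        enorm_apply_smul_sphere_le hC hb hp p.2
    _ = ρ Set.univ * ∫⁻ r, g r ∂ν := by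
        rw [← lintegral_map hg measurable_fst, Measure.map_fst_prod, lintegral_smul_measure,
          smul_eq_mul]
    _ = _ := by
        rw [lintegral_const_mul _ (by fun_prop), lintegral_add_left measurable_const,
          lintegral_const, one_mul, mul_comm]

lemma integral_polarMeasure {G : Type*} [NormedAddCommGroup G] [NormedSpace ℝ G]
    {f : E d → G} (hf : Continuous f) {ν : Measure ℝ} {ρ : Measure (sphere (0 : E d) 1)}
    [SFinite ν] [SFinite ρ] (hfi : Integrable f (polarMeasure ν ρ)) :
    ∫ x, f x ∂(polarMeasure ν ρ) = ∫ r, ∫ θ, f (r • (θ : E d)) ∂ρ ∂ν := by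
  have hmap := continuous_polarMap (d := d).measurable.aemeasurable (μ := ν.prod ρ)
  rw [polarMeasure, integral_map hmap hf.aestronglyMeasurable]
  exact integral_prod _ ((integrable_map_measure hf.aestronglyMeasurable hmap).mp hfi)

lemma integrable_integral_polarMeasure {G : Type*} [NormedAddCommGroup G] [NormedSpace ℝ G]
    {f : E d → G} (hf : Continuous f) {ν : Measure ℝ} {ρ : Measure (sphere (0 : E d) 1)}
    [SFinite ν] [SFinite ρ] (hfi : Integrable f (polarMeasure ν ρ)) :
    Integrable (fun r => ∫ θ, f (r • (θ : E d)) ∂ρ) ν :=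
  ((integrable_map_measure hf.aestronglyMeasurable
    continuous_polarMap.measurable.aemeasurable).mp hfi).integral_prod_left

end Polar

namespace HarmonicBasis

variable {d : ℕ} (B : HarmonicBasis d)

abbrev Index := (k : ℕ) × Fin (B.a k)

@[fun_prop]
lemma continuous_Yf (k : ℕ) (l : Fin (B.a k)) : Continuous (B.Yf k l) :=
  (continuous_eval _).comp <| continuous_pi fun i => PiLp.continuous_apply 2 _ i

lemma Yf_smul (k : ℕ) (l : Fin (B.a k)) (r : ℝ) (x : E d) :
    B.Yf k l (r • x) = r ^ k * B.Yf k l x :=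
  eval_smul_of_isHomogeneous (B.homogeneous k l) r _

lemma evalC_YC (k : ℕ) (l : Fin (B.a k)) (x : E d) :
    evalC (B.YC k l) x = (B.Yf k l x : ℂ) := by
  simp only [evalC, YC, Yf, eval_map]
  exact (eval₂_comp_left (algebraMap ℝ ℂ) (RingHom.id ℝ) _ _).symm

lemma hasPolynomialGrowth_Yf (k : ℕ) (l : Fin (B.a k)) : HasPolynomialGrowth (B.Yf k l) := by
  obtain ⟨C, N, hC, hb⟩ := hasPolynomialGrowth_evalC (B.YC k l)
  exact ⟨C, N, hC, fun x => by simpa [evalC_YC] using hb x⟩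

lemma evalC_aeval_normSqP_mul_YC (q : Polynomial ℂ) (k : ℕ) (l : Fin (B.a k)) (x : E d) :
    evalC (Polynomial.aeval (normSqP d) q * B.YC k l) x
      = q.eval ((‖x‖ ^ 2 : ℝ) : ℂ) * B.Yf k l x := by
  rw [← evalC_normSqP, ← evalC_YC, ← evalC_aeval]
  simp [evalC]

lemma integral_Yf_mul_Yf (i j : B.Index) :
    ∫ θ : sphere (0 : E d) 1, B.Yf i.1 i.2 θ * B.Yf j.1 j.2 θ ∂(sphMeas d)
      = if i = j then 1 else 0 := by
  unfold Yf
  rw [B.orthonormal]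
  refine if_congr ?_ rfl rfl
  rcases i with ⟨k, l⟩
  rcases j with ⟨k', l'⟩
  constructor
  · rintro ⟨rfl, h⟩
    exact congrArg (Sigma.mk k) (Fin.ext h)
  · intro h
    cases h
    exact ⟨rfl, rfl⟩

lemma lintegral_ofReal_Yf_sq (k : ℕ) (l : Fin (B.a k)) :
    ∫⁻ θ : sphere (0 : E d) 1, ENNReal.ofReal (B.Yf k l θ ^ 2) ∂(sphMeas d) = 1 := by
  have hint : Integrable (fun θ : sphere (0 : E d) 1 => B.Yf k l θ ^ 2) (sphMeas d) :=
    integrable_sphMeas_of_continuous (((B.continuous_Yf k l).comp continuous_subtype_val).pow 2)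
  rw [← ofReal_integral_eq_lintegral_ofReal hint (.of_forall fun θ => sq_nonneg _)]
  simpa [sq] using B.integral_Yf_mul_Yf ⟨k, l⟩ ⟨k, l⟩

lemma integral_Yf_smul_mul_Yf (h : ℝ → ℝ) (i : B.Index) (k : ℕ) (l : Fin (B.a k)) (r : ℝ) :
    ∫ θ : sphere (0 : E d) 1,
        B.Yf i.1 i.2 θ • (h ‖r • (θ : E d)‖ * B.Yf k l (r • (θ : E d))) ∂(sphMeas d)
      = if i = ⟨k, l⟩ then h |r| * r ^ k else 0 := by
  have hpt : ∀ θ : sphere (0 : E d) 1,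
      B.Yf i.1 i.2 θ • (h ‖r • (θ : E d)‖ * B.Yf k l (r • (θ : E d)))
        = h |r| * r ^ k * (B.Yf i.1 i.2 θ * B.Yf k l θ) := fun θ => by
    rw [norm_smul_sphere, Yf_smul, smul_eq_mul]
    ring
  simp only [hpt, integral_const_mul]
  rw [B.integral_Yf_mul_Yf i ⟨k, l⟩, mul_ite, mul_one, mul_zero]

lemma integral_Yf_smul_evalC_sum (S : Finset B.Index) (q : B.Index → Polynomial ℂ)
    (i : B.Index) (r : ℝ) :
    ∫ θ : sphere (0 : E d) 1, B.Yf i.1 i.2 θ •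
        evalC (∑ j ∈ S, Polynomial.aeval (normSqP d) (q j) * B.YC j.1 j.2) (r • (θ : E d))
        ∂(sphMeas d)
      = if i ∈ S then (q i).eval ((r : ℂ) ^ 2) * (r : ℂ) ^ i.1 else 0 := by
  have hpt : ∀ (j : B.Index) (θ : sphere (0 : E d) 1),
      B.Yf i.1 i.2 θ • evalC (Polynomial.aeval (normSqP d) (q j) * B.YC j.1 j.2) (r • (θ : E d))
        = (q j).eval ((r : ℂ) ^ 2) * (r : ℂ) ^ j.1 * ((B.Yf i.1 i.2 θ * B.Yf j.1 j.2 θ : ℝ) : ℂ) :=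
    fun j θ => by
      rw [evalC_aeval_normSqP_mul_YC, norm_smul_sphere, sq_abs, Yf_smul, Complex.real_smul]
      push_cast
      ring
  have hsum : ∀ θ : sphere (0 : E d) 1,
      evalC (∑ j ∈ S, Polynomial.aeval (normSqP d) (q j) * B.YC j.1 j.2) (r • (θ : E d))
        = ∑ j ∈ S, evalC (Polynomial.aeval (normSqP d) (q j) * B.YC j.1 j.2) (r • (θ : E d)) :=
    fun θ => map_sum (eval fun n => ((r • (θ : E d)) n : ℂ)) _ S
  simp only [hsum, Finset.smul_sum, hpt]
  rw [integral_finsetSum _ fun j _ => integrable_sphMeas_of_continuous (by fun_prop)]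
  simp only [integral_const_mul, integral_complex_ofReal, B.integral_Yf_mul_Yf]
  simp only [apply_ite (fun t : ℝ => (t : ℂ)), Complex.ofReal_one, Complex.ofReal_zero, mul_ite,
    mul_one, mul_zero, Finset.sum_ite_eq]

/-- `s = 1` and `s = -1` give the positive and negative parts of `Y_{k,l} dθ`. -/
def sphereWeight (s : ℝ) (k : ℕ) (l : Fin (B.a k)) : Measure (sphere (0 : E d) 1) :=
  (sphMeas d).withDensity fun θ => ENNReal.ofReal (s * B.Yf k l θ)

lemma sphereWeight_univ_le {s : ℝ} (hs : |s| ≤ 1) (k : ℕ) (l : Fin (B.a k)) :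
    B.sphereWeight s k l Set.univ ≤ sphMeas d Set.univ + 1 := by
  have hpt : ∀ θ : sphere (0 : E d) 1,
      ENNReal.ofReal (s * B.Yf k l θ) ≤ 1 + ENNReal.ofReal (B.Yf k l θ ^ 2) := fun θ => by
    rw [← ENNReal.ofReal_one, ← ENNReal.ofReal_add zero_le_one (sq_nonneg _)]
    gcongr
    set y := B.Yf k l θ
    have hsy : s * y ≤ |y| := by
      calc s * y ≤ |s * y| := le_abs_self _
        _ = |s| * |y| := abs_mul s y
        _ ≤ 1 * |y| := by gcongr
        _ = |y| := one_mul _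
    nlinarith [sq_abs y, sq_nonneg (|y| - 1)]
  calc B.sphereWeight s k l Set.univ
      = ∫⁻ θ, ENNReal.ofReal (s * B.Yf k l θ) ∂(sphMeas d) := by
        rw [sphereWeight, withDensity_apply _ MeasurableSet.univ, Measure.restrict_univ]
    _ ≤ ∫⁻ θ, (1 + ENNReal.ofReal (B.Yf k l θ ^ 2)) ∂(sphMeas d) := lintegral_mono hpt
    _ = sphMeas d Set.univ + 1 := by
        rw [lintegral_add_left measurable_const, lintegral_const, one_mul,
          lintegral_ofReal_Yf_sq]

lemma isFiniteMeasure_sphereWeight {s : ℝ} (hs : |s| ≤ 1) (k : ℕ) (l : Fin (B.a k)) :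
    IsFiniteMeasure (B.sphereWeight s k l) :=
  ⟨(B.sphereWeight_univ_le hs k l).trans_lt
    (ENNReal.add_lt_top.mpr ⟨measure_lt_top _ _, ENNReal.one_lt_top⟩)⟩

lemma integral_sphereWeight_sub {G : Type*} [NormedAddCommGroup G] [NormedSpace ℝ G]
    (k : ℕ) (l : Fin (B.a k)) {g : sphere (0 : E d) 1 → G} (hg : Continuous g) :
    ∫ θ, g θ ∂(B.sphereWeight 1 k l) - ∫ θ, g θ ∂(B.sphereWeight (-1) k l)
      = ∫ θ, B.Yf k l θ • g θ ∂(sphMeas d) := by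
  have hY : Continuous fun θ : sphere (0 : E d) 1 => B.Yf k l θ :=
    (B.continuous_Yf k l).comp continuous_subtype_val
  have hpart : ∀ s : ℝ, ∫ θ, g θ ∂(B.sphereWeight s k l)
      = ∫ θ, (s * B.Yf k l θ).toNNReal • g θ ∂(sphMeas d) := fun s =>
    integral_withDensity_eq_integral_smul
      (continuous_real_toNNReal.comp (continuous_const.mul hY)).measurable g
  rw [hpart, hpart, ← integral_sub]
  · refine integral_congr_ae (.of_forall fun θ => ?_)
    simp only [NNReal.smul_def, Real.coe_toNNReal', one_mul, neg_one_mul, ← sub_smul,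
      max_zero_sub_max_neg_zero_eq_self]
  all_goals exact integrable_sphMeas_of_continuous <|
    (continuous_real_toNNReal.comp (continuous_const.mul hY)).smul hg

variable (σ : (k : ℕ) → Fin (B.a k) → Measure ℝ)

/-- `ν_{k,l} = r^{-k} σ_{k,l}`. At `r = 0` the density is `∞` when `k ≥ 1`; this is harmless
because `C_0 < ∞` forces `σ_{k,l} {0} = 0` (see `integral_radialMeasure`). -/
def radialMeasure (k : ℕ) (l : Fin (B.a k)) : Measure ℝ :=
  (σ k l).withDensity fun r => (ENNReal.ofReal r ^ k)⁻¹

lemma lintegral_pow_radialMeasure (N k : ℕ) (l : Fin (B.a k)) :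
    ∫⁻ r, ENNReal.ofReal r ^ N ∂(B.radialMeasure σ k l)
      = ∫⁻ r, ENNReal.ofReal r ^ N * (ENNReal.ofReal r ^ k)⁻¹ ∂(σ k l) := by
  rw [radialMeasure, lintegral_withDensity_eq_lintegral_mul _ (by fun_prop) (by fun_prop)]
  simp only [Pi.mul_apply, mul_comm]

lemma tsum_lintegral_pow_radialMeasure_lt_top (hsum : B.SummCond σ) (N : ℕ) :
    ∑' i : B.Index, ∫⁻ r, ENNReal.ofReal r ^ N ∂(B.radialMeasure σ i.1 i.2) < ⊤ := by
  simp only [lintegral_pow_radialMeasure]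
  rw [ENNReal.tsum_sigma (fun k l => ∫⁻ r, ENNReal.ofReal r ^ N * (ENNReal.ofReal r ^ k)⁻¹
    ∂(σ k l))]
  simpa only [tsum_fintype] using hsum N

lemma radialMeasure_univ (k : ℕ) (l : Fin (B.a k)) :
    B.radialMeasure σ k l Set.univ = ∫⁻ r, ENNReal.ofReal r ^ 0 ∂(B.radialMeasure σ k l) := by
  simp

lemma isFiniteMeasure_radialMeasure (hsum : B.SummCond σ) (k : ℕ) (l : Fin (B.a k)) :
    IsFiniteMeasure (B.radialMeasure σ k l) := by
  refine ⟨?_⟩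
  rw [radialMeasure_univ]
  exact (ENNReal.le_tsum (⟨k, l⟩ : B.Index)).trans_lt
    (B.tsum_lintegral_pow_radialMeasure_lt_top σ hsum 0)

lemma radialMeasure_Iio (hpos : ∀ k l, σ k l (Set.Iio 0) = 0) (k : ℕ) (l : Fin (B.a k)) :
    B.radialMeasure σ k l (Set.Iio 0) = 0 := by
  rw [radialMeasure, withDensity_apply _ measurableSet_Iio]
  exact setLIntegral_measure_zero _ _ (hpos k l)

lemma integral_radialMeasure (hpos : ∀ k l, σ k l (Set.Iio 0) = 0) (hsum : B.SummCond σ)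
    (k : ℕ) (l : Fin (B.a k)) (q : Polynomial ℂ) :
    ∫ r, q.eval ((r : ℂ) ^ 2) * (r : ℂ) ^ k ∂(B.radialMeasure σ k l)
      = ∫ r, q.eval ((r : ℂ) ^ 2) ∂(σ k l) := by
  have hD : Measurable fun r : ℝ => (ENNReal.ofReal r ^ k)⁻¹ := by fun_prop
  have hfin : ∀ᵐ r ∂(σ k l), (ENNReal.ofReal r ^ k)⁻¹ < ⊤ := by
    have := B.isFiniteMeasure_radialMeasure σ hsum k l
    refine ae_lt_top hD (ne_of_lt ?_)
    simpa [radialMeasure, withDensity_apply _ MeasurableSet.univ] using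
      measure_lt_top (B.radialMeasure σ k l) Set.univ
  rw [radialMeasure, integral_withDensity_eq_integral_toReal_smul hD hfin]
  refine integral_congr_ae (hfin.mp ((ae_nonneg_of_measure_Iio (hpos k l)).mono fun r hr hr' => ?_))
  rw [ENNReal.inv_lt_top, ← ENNReal.ofReal_pow hr, ENNReal.ofReal_pos] at hr'
  have hrk : (r : ℂ) ^ k ≠ 0 := by exact_mod_cast hr'.ne'
  dsimp only
  rw [← ENNReal.ofReal_pow hr, ENNReal.toReal_inv, ENNReal.toReal_ofReal hr'.le,
    Complex.real_smul]
  push_cast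
  field_simp

/-- `s = 1` and `s = -1` give the positive and negative parts of the measure of the theorem,
`momentMeasure`. -/
def momentPart (s : ℝ) : Measure (E d) :=
  Measure.sum fun i : B.Index =>
    polarMeasure (B.radialMeasure σ i.1 i.2) (B.sphereWeight s i.1 i.2)

def momentMeasure [IsFiniteMeasure (B.momentPart σ 1)] [IsFiniteMeasure (B.momentPart σ (-1))] :
    SignedMeasure (E d) :=
  (B.momentPart σ 1).toSignedMeasure - (B.momentPart σ (-1)).toSignedMeasure

variable {σ}

lemma integrable_momentPart (hpos : ∀ k l, σ k l (Set.Iio 0) = 0) (hsum : B.SummCond σ)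
    {s : ℝ} (hs : |s| ≤ 1) {G : Type*} [NormedAddCommGroup G] {f : E d → G}
    (hf : Continuous f) (hg : HasPolynomialGrowth f) : Integrable f (B.momentPart σ s) := by
  obtain ⟨C, N, hC, hb⟩ := hg
  refine ⟨hf.aestronglyMeasurable, ?_⟩
  set K : ℝ≥0∞ := ENNReal.ofReal C * 2 ^ (N - 1) * (sphMeas d Set.univ + 1)
  have hK : K < ⊤ := by
    have : sphMeas d Set.univ + 1 < ⊤ := ENNReal.add_lt_top.mpr ⟨measure_lt_top _ _, by simp⟩
    exact ENNReal.mul_lt_top (ENNReal.mul_lt_top ENNReal.ofReal_lt_top (by simp)) this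
  have hterm : ∀ i : B.Index,
      ∫⁻ x, ‖f x‖ₑ ∂(polarMeasure (B.radialMeasure σ i.1 i.2) (B.sphereWeight s i.1 i.2))
        ≤ K * (∫⁻ r, ENNReal.ofReal r ^ 0 ∂(B.radialMeasure σ i.1 i.2)
          + ∫⁻ r, ENNReal.ofReal r ^ N ∂(B.radialMeasure σ i.1 i.2)) := fun i => by
    have := B.isFiniteMeasure_radialMeasure σ hsum i.1 i.2
    have := B.isFiniteMeasure_sphereWeight hs i.1 i.2
    refine (lintegral_enorm_polarMeasure_le hf hC hb _ (B.radialMeasure_Iio σ hpos i.1 i.2)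
      _).trans ?_
    rw [← radialMeasure_univ, mul_right_comm]
    exact mul_le_mul_left (mul_le_mul_right (B.sphereWeight_univ_le hs i.1 i.2) _) _
  rw [HasFiniteIntegral, momentPart, lintegral_sum_measure]
  refine (ENNReal.tsum_le_tsum hterm).trans_lt ?_
  rw [ENNReal.tsum_mul_left, ENNReal.tsum_add]
  exact ENNReal.mul_lt_top hK (ENNReal.add_lt_top.mpr
    ⟨B.tsum_lintegral_pow_radialMeasure_lt_top σ hsum 0,
      B.tsum_lintegral_pow_radialMeasure_lt_top σ hsum N⟩)

lemma isFiniteMeasure_momentPart (hpos : ∀ k l, σ k l (Set.Iio 0) = 0) (hsum : B.SummCond σ)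
    {s : ℝ} (hs : |s| ≤ 1) : IsFiniteMeasure (B.momentPart σ s) :=
  (integrable_const_iff.mp (B.integrable_momentPart hpos hsum hs continuous_const
    (.of_bounded fun _ => le_refl ‖(1 : ℝ)‖))).resolve_left one_ne_zero

section

variable [IsFiniteMeasure (B.momentPart σ 1)] [IsFiniteMeasure (B.momentPart σ (-1))]

lemma sInt_momentMeasure (hpos : ∀ k l, σ k l (Set.Iio 0) = 0) (hsum : B.SummCond σ)
    {G : Type*} [NormedAddCommGroup G] [NormedSpace ℝ G] [CompleteSpace G] {f : E d → G}
    (hf : Continuous f) (hg : HasPolynomialGrowth f) :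
    sInt (B.momentMeasure σ) f
      = ∑' i : B.Index, ∫ r, ∫ θ, B.Yf i.1 i.2 θ • f (r • (θ : E d)) ∂(sphMeas d)
          ∂(B.radialMeasure σ i.1 i.2) := by
  have hint := fun (s : ℝ) (hs : |s| ≤ 1) => B.integrable_momentPart hpos hsum hs hf hg
  have hp : HasSum _ (∫ x, f x ∂(B.momentPart σ 1)) :=
    hasSum_integral_measure (hint 1 (by norm_num))
  have hn : HasSum _ (∫ x, f x ∂(B.momentPart σ (-1))) :=
    hasSum_integral_measure (hint (-1) (by norm_num))
  rw [momentMeasure, sInt_toSignedMeasure_sub _ _ (hint 1 (by norm_num)) (hint (-1) (by norm_num)),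
    ← hp.tsum_eq, ← hn.tsum_eq, ← hp.summable.tsum_sub hn.summable]
  refine tsum_congr fun i => ?_
  have := B.isFiniteMeasure_radialMeasure σ hsum i.1 i.2
  have hpart : ∀ s : ℝ, |s| ≤ 1 →
      Integrable f (polarMeasure (B.radialMeasure σ i.1 i.2) (B.sphereWeight s i.1 i.2)) :=
    fun s hs => (hint s hs).mono_measure (Measure.le_sum _ i)
  have := B.isFiniteMeasure_sphereWeight (s := 1) (by norm_num) i.1 i.2
  have := B.isFiniteMeasure_sphereWeight (s := -1) (by norm_num) i.1 i.2
  rw [integral_polarMeasure hf (hpart 1 (by norm_num)),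
    integral_polarMeasure hf (hpart (-1) (by norm_num)),
    ← integral_sub (integrable_integral_polarMeasure hf (hpart 1 (by norm_num)))
      (integrable_integral_polarMeasure hf (hpart (-1) (by norm_num)))]
  exact integral_congr_ae (.of_forall fun r =>
    B.integral_sphereWeight_sub i.1 i.2 (hf.comp (continuous_subtype_val.const_smul r)))

lemma pseudoPositive_momentMeasure (hpos : ∀ k l, σ k l (Set.Iio 0) = 0) (hsum : B.SummCond σ) :
    B.PseudoPositive (B.momentMeasure σ) := by
  intro k l h hc hcs hh
  have hf : Continuous fun x : E d => h ‖x‖ * B.Yf k l x := by fun_prop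
  obtain ⟨Ch, hCh⟩ := hcs.exists_bound_of_continuous hc
  have hg : HasPolynomialGrowth fun x : E d => h ‖x‖ * B.Yf k l x :=
    (HasPolynomialGrowth.of_bounded fun x => hCh ‖x‖).mul (B.hasPolynomialGrowth_Yf k l)
  simp only [B.sInt_momentMeasure hpos hsum hf hg, B.integral_Yf_smul_mul_Yf]
  rw [tsum_eq_single ⟨k, l⟩ fun i hi => by simp [hi]]
  simp only [if_true]
  exact integral_nonneg_of_ae <| (ae_nonneg_of_measure_Iio (B.radialMeasure_Iio σ hpos k l)).mono
    fun r hr => mul_nonneg (hh _) (pow_nonneg hr k)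

lemma isMomentMeasure_momentMeasure (hpos : ∀ k l, σ k l (Set.Iio 0) = 0) (hsum : B.SummCond σ) :
    IsMomentMeasure (B.momentMeasure σ) :=
  fun P =>
    have hint := fun (s : ℝ) (hs : |s| ≤ 1) =>
      B.integrable_momentPart hpos hsum hs (continuous_evalC P) (hasPolynomialGrowth_evalC P)
    ((hint 1 (by norm_num)).add_measure (hint (-1) (by norm_num))).mono_measure
      (totalVariation_toSignedMeasure_sub_le _ _)

lemma sInt_momentMeasure_of_gaussDecomp (hpos : ∀ k l, σ k l (Set.Iio 0) = 0)
    (hsum : B.SummCond σ) {f : MvPolynomial (Fin d) ℂ} {K : ℕ}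
    {p : (k : ℕ) → Fin (B.a k) → Polynomial ℂ} (hfp : B.GaussDecomp f K p) :
    ∑ k ∈ Finset.range (K + 1), ∑ l, ∫ r, (p k l).eval ((r : ℂ) ^ 2) ∂(σ k l)
      = sInt (B.momentMeasure σ) (evalC f) := by
  rw [B.sInt_momentMeasure hpos hsum (continuous_evalC f) (hasPolynomialGrowth_evalC f), hfp.2,
    ← Finset.sum_sigma (Finset.range (K + 1)) (fun _ => Finset.univ)
      (fun j : B.Index => Polynomial.aeval (normSqP d) (p j.1 j.2) * B.YC j.1 j.2)]
  simp only [B.integral_Yf_smul_evalC_sum _ (fun j : B.Index => p j.1 j.2)]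
  rw [tsum_eq_sum (s := (Finset.range (K + 1)).sigma fun _ => Finset.univ)
    fun i hi => by simp only [if_neg hi, integral_zero], Finset.sum_sigma]
  refine Finset.sum_congr rfl fun k hk => Finset.sum_congr rfl fun l _ => ?_
  simp only [Finset.mem_sigma, hk, Finset.mem_univ, and_self, if_true]
  exact (B.integral_radialMeasure σ hpos hsum k l (p k l)).symm

end

end HarmonicBasis

theorem statement4_general {d : ℕ} (B : HarmonicBasis d)
    (σ : (k : ℕ) → Fin (B.a k) → Measure ℝ)
    (hpos : ∀ k l, (σ k l) (Set.Iio 0) = 0)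
    (hsum : B.SummCond σ) :
    ∃ μ : SignedMeasure (E d), B.PseudoPositive μ ∧ IsMomentMeasure μ ∧
      ∀ (f : MvPolynomial (Fin d) ℂ) (K : ℕ) (p : (k : ℕ) → Fin (B.a k) → Polynomial ℂ),
        B.GaussDecomp f K p →
        (∑ k ∈ Finset.range (K + 1), ∑ l, ∫ r, (p k l).eval ((r : ℂ) ^ 2) ∂(σ k l))
          = sInt μ (evalC f) := by
  have := B.isFiniteMeasure_momentPart hpos hsum (s := 1) (by norm_num)
  have := B.isFiniteMeasure_momentPart hpos hsum (s := -1) (by norm_num)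
  exact ⟨B.momentMeasure σ, B.pseudoPositive_momentMeasure hpos hsum,
    B.isMomentMeasure_momentMeasure hpos hsum,
    fun f K p hfp => B.sInt_momentMeasure_of_gaussDecomp hpos hsum hfp⟩

theorem statement4 {d : ℕ} (hd : 1 ≤ d) (B : HarmonicBasis d)
    (σ : (k : ℕ) → Fin (B.a k) → Measure ℝ)
    (hpos : ∀ k l, (σ k l) (Set.Iio 0) = 0)
    (hsum : B.SummCond σ) :
    ∃ μ : SignedMeasure (E d), B.PseudoPositive μ ∧ IsMomentMeasure μ ∧
      ∀ (f : MvPolynomial (Fin d) ℂ) (K : ℕ) (p : (k : ℕ) → Fin (B.a k) → Polynomial ℂ),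
        B.GaussDecomp f K p →
        (∑ k ∈ Finset.range (K + 1), ∑ l, ∫ r, (p k l).eval ((r : ℂ) ^ 2) ∂(σ k l))
          = sInt μ (evalC f) :=
  statement4_general B σ hpos hsum
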